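/- Let g_i = [[R_i, r_i],[0, 1]] and g_j = [[R_j, r_j],[0, 1]] be elements of SE(2) with r_i = (x_i, y_i), r_j = (x_j, y_j), and let σ > 0. Then (x_i - x_j)² + (y_i - y_j)² - 4 = ‖Ad_{g_i⁻¹ g_j} e₁‖² - 6, so the collision avoidance potential satisfies σ/(2((x_i - x_j)² + (y_i - y_j)² - 4)) = σ/(2(‖Ad_{g_i⁻¹ g_j} e₁‖² - 6)); moreover for a single g = [[R, (x, y)],[0, 1]] ∈ SE(2), x² + y² - 4 = ‖Ad_{g⁻¹} e₁‖² - 6, so the obstacle avoidance potential satisfies σ/(2(x² + y² - 4)) = σ/(2(‖Ad_{g⁻¹} e₁‖² - 6)). -/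

import Mathlib

/-!
For `g = [[Q, t],[0, 1]]` with `Qᵀ Q = 1` one has `g⁻¹ = [[Qᵀ, -Qᵀ t],[0, 1]]`, and writing
`e₁ = [[J, 0],[0, 0]]` gives `Ad_g e₁ = [[Q J Qᵀ, -Q J Qᵀ t],[0, 0]]`. The block `Q J Qᵀ` is
again orthogonal, so `‖Ad_g e₁‖² = tr 1 + |t|² = 2 + |t|²`. The translation part of `g_i⁻¹ g_j`
is `R_iᵀ (r_j - r_i)` and that of `g⁻¹` is `-Rᵀ r`, with lengths `|r_j - r_i|` and `|r|`.
-/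

open Matrix

noncomputable section

/-- The SE(2) matrix `[[R, r],[0, 1]]`. -/
def SE2 (R : Matrix (Fin 2) (Fin 2) ℝ) (r : Fin 2 → ℝ) : Matrix (Fin 3) (Fin 3) ℝ :=
  !![R 0 0, R 0 1, r 0; R 1 0, R 1 1, r 1; 0, 0, 1]

/-- The basis element `e₁ = [[0,-1,0],[1,0,0],[0,0,0]]` of se(2). -/
def e1 : Matrix (Fin 3) (Fin 3) ℝ := !![0, -1, 0; 1, 0, 0; 0, 0, 0]

/-- The squared norm `‖ξ‖² = tr(ξᵀξ)` on se(2). -/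
def normSq (ξ : Matrix (Fin 3) (Fin 3) ℝ) : ℝ := (ξᵀ * ξ).trace

def se2 (A : Matrix (Fin 2) (Fin 2) ℝ) (v : Fin 2 → ℝ) : Matrix (Fin 3) (Fin 3) ℝ :=
  !![A 0 0, A 0 1, v 0; A 1 0, A 1 1, v 1; 0, 0, 0]

section
variable {n R : Type*} [Fintype n] [DecidableEq n] [CommRing R]

theorem dotProduct_mulVec_self_of_transpose_mul_self {M : Matrix n n R} (hM : Mᵀ * M = 1)
    (v : n → R) : (M *ᵥ v) ⬝ᵥ (M *ᵥ v) = v ⬝ᵥ v := by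
  rw [← dotProduct_transpose_mulVec, mulVec_mulVec, hM, one_mulVec]

theorem transpose_mul_self_mul {A B : Matrix n n R} (hA : Aᵀ * A = 1) (hB : Bᵀ * B = 1) :
    (A * B)ᵀ * (A * B) = 1 := by
  rw [transpose_mul, Matrix.mul_assoc, ← Matrix.mul_assoc Aᵀ, hA, Matrix.one_mul, hB]

theorem transpose_transpose_mul_transpose {A : Matrix n n R} (hA : Aᵀ * A = 1) :
    Aᵀᵀ * Aᵀ = 1 := by
  rw [transpose_transpose, mul_eq_one_comm.mp hA]

end

theorem SE2_mul_SE2 (Q Q' : Matrix (Fin 2) (Fin 2) ℝ) (t t' : Fin 2 → ℝ) :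
    SE2 Q t * SE2 Q' t' = SE2 (Q * Q') (Q *ᵥ t' + t) := by
  ext i j
  fin_cases i <;> fin_cases j <;> simp [SE2, mul_apply, Fin.sum_univ_succ] <;> ring

theorem SE2_one_zero : SE2 1 0 = 1 := by
  ext i j
  fin_cases i <;> fin_cases j <;> simp [SE2]

theorem SE2_mul_se2_mul_SE2 (Q A Q' : Matrix (Fin 2) (Fin 2) ℝ) (t v t' : Fin 2 → ℝ) :
    SE2 Q t * se2 A v * SE2 Q' t' = se2 (Q * A * Q') (Q *ᵥ (A *ᵥ t' + v)) := by
  ext i j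
  fin_cases i <;> fin_cases j <;>
    simp [SE2, se2, mul_apply, mulVec, dotProduct, Fin.sum_univ_succ] <;> ring

theorem normSq_se2 (A : Matrix (Fin 2) (Fin 2) ℝ) (v : Fin 2 → ℝ) :
    normSq (se2 A v) = (Aᵀ * A).trace + v ⬝ᵥ v := by
  simp [normSq, se2, trace, mul_apply, dotProduct, Fin.sum_univ_succ]
  ring

theorem e1_eq_se2 : e1 = se2 !![0, -1; 1, 0] 0 := by
  ext i j
  fin_cases i <;> fin_cases j <;> rfl

theorem transpose_mul_self_rotation_quarter :
    (!![0, -1; 1, 0] : Matrix (Fin 2) (Fin 2) ℝ)ᵀ * !![0, -1; 1, 0] = 1 := by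
  ext i j
  fin_cases i <;> fin_cases j <;> simp [mul_apply, Fin.sum_univ_succ]

section
variable {Q : Matrix (Fin 2) (Fin 2) ℝ} (t : Fin 2 → ℝ)

theorem SE2_transpose_mul_SE2 (hQ : Qᵀ * Q = 1) : SE2 Qᵀ (-(Qᵀ *ᵥ t)) * SE2 Q t = 1 := by
  rw [SE2_mul_SE2, hQ, add_neg_cancel, SE2_one_zero]

theorem SE2_inv (hQ : Qᵀ * Q = 1) : (SE2 Q t)⁻¹ = SE2 Qᵀ (-(Qᵀ *ᵥ t)) :=
  inv_eq_left_inv (SE2_transpose_mul_SE2 t hQ)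

theorem SE2_inv_inv (hQ : Qᵀ * Q = 1) : (SE2 Q t)⁻¹⁻¹ = SE2 Q t :=
  nonsing_inv_nonsing_inv _ (isUnit_det_of_left_inverse (SE2_transpose_mul_SE2 t hQ))

theorem normSq_SE2_mul_e1_mul_inv (hQ : Qᵀ * Q = 1) :
    normSq (SE2 Q t * e1 * (SE2 Q t)⁻¹) = 2 + t ⬝ᵥ t := by
  have hJ := transpose_mul_self_rotation_quarter
  have hQ' := transpose_transpose_mul_transpose hQ
  rw [SE2_inv t hQ, e1_eq_se2, SE2_mul_se2_mul_SE2, normSq_se2,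
    transpose_mul_self_mul (transpose_mul_self_mul hQ hJ) hQ', add_zero,
    dotProduct_mulVec_self_of_transpose_mul_self hQ,
    dotProduct_mulVec_self_of_transpose_mul_self hJ, neg_dotProduct_neg,
    dotProduct_mulVec_self_of_transpose_mul_self hQ', trace_one, Fintype.card_fin,
    Nat.cast_ofNat]

theorem normSq_SE2_inv_mul_e1_mul_SE2 (hQ : Qᵀ * Q = 1) :
    normSq ((SE2 Q t)⁻¹ * e1 * SE2 Q t) = 2 + t ⬝ᵥ t := by
  have hQ' := transpose_transpose_mul_transpose hQ
  nth_rw 2 [← SE2_inv_inv t hQ]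
  rw [SE2_inv t hQ, normSq_SE2_mul_e1_mul_inv _ hQ', neg_dotProduct_neg,
    dotProduct_mulVec_self_of_transpose_mul_self hQ']

theorem normSq_SE2_inv_mul_SE2_conj_e1 {Q' : Matrix (Fin 2) (Fin 2) ℝ} (t' : Fin 2 → ℝ)
    (hQ : Qᵀ * Q = 1) (hQ' : Q'ᵀ * Q' = 1) :
    normSq ((SE2 Q t)⁻¹ * SE2 Q' t' * e1 * ((SE2 Q t)⁻¹ * SE2 Q' t')⁻¹) =
      2 + (t' - t) ⬝ᵥ (t' - t) := by
  have hQT := transpose_transpose_mul_transpose hQ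
  rw [SE2_inv t hQ, SE2_mul_SE2, normSq_SE2_mul_e1_mul_inv _ (transpose_mul_self_mul hQT hQ'),
    ← sub_eq_add_neg, ← mulVec_sub, dotProduct_mulVec_self_of_transpose_mul_self hQT]

end

theorem potentials_via_adjoint_general (Ri Rj R : Matrix (Fin 2) (Fin 2) ℝ)
    (xi yi xj yj x y : ℝ)
    (hRi : Riᵀ * Ri = 1)
    (hRj : Rjᵀ * Rj = 1)
    (hR : Rᵀ * R = 1)
    (σ : ℝ) :
    (xi - xj) ^ 2 + (yi - yj) ^ 2 - 4 =
      normSq ((SE2 Ri ![xi, yi])⁻¹ * SE2 Rj ![xj, yj] * e1 *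
        ((SE2 Ri ![xi, yi])⁻¹ * SE2 Rj ![xj, yj])⁻¹) - 6 ∧
    σ / (2 * ((xi - xj) ^ 2 + (yi - yj) ^ 2 - 4)) =
      σ / (2 * (normSq ((SE2 Ri ![xi, yi])⁻¹ * SE2 Rj ![xj, yj] * e1 *
        ((SE2 Ri ![xi, yi])⁻¹ * SE2 Rj ![xj, yj])⁻¹) - 6)) ∧
    x ^ 2 + y ^ 2 - 4 =
      normSq ((SE2 R ![x, y])⁻¹ * e1 * SE2 R ![x, y]) - 6 ∧
    σ / (2 * (x ^ 2 + y ^ 2 - 4)) =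
      σ / (2 * (normSq ((SE2 R ![x, y])⁻¹ * e1 * SE2 R ![x, y]) - 6)) := by
  rw [normSq_SE2_inv_mul_SE2_conj_e1 _ _ hRi hRj, normSq_SE2_inv_mul_e1_mul_SE2 _ hR]
  simp only [dotProduct, Fin.sum_univ_two, Pi.sub_apply, cons_val_zero, cons_val_one]
  refine ⟨by ring, by ring, by ring, by ring⟩

/-- With agent radius `r̄ = 1` and a unit-radius obstacle at the origin:
`(x_i-x_j)² + (y_i-y_j)² - 4 = ‖Ad_{g_i⁻¹g_j}e₁‖² - 6` (so the collision avoidance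
potentials agree) and `x² + y² - 4 = ‖Ad_{g⁻¹}e₁‖² - 6` (so the obstacle avoidance
potentials agree). -/
theorem potentials_via_adjoint (Ri Rj R : Matrix (Fin 2) (Fin 2) ℝ)
    (xi yi xj yj x y : ℝ)
    (hRi : Riᵀ * Ri = 1) (hdeti : Ri.det = 1)
    (hRj : Rjᵀ * Rj = 1) (hdetj : Rj.det = 1)
    (hR : Rᵀ * R = 1) (hdet : R.det = 1)
    (σ : ℝ) (hσ : 0 < σ) :
    (xi - xj) ^ 2 + (yi - yj) ^ 2 - 4 =
      normSq ((SE2 Ri ![xi, yi])⁻¹ * SE2 Rj ![xj, yj] * e1 *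
        ((SE2 Ri ![xi, yi])⁻¹ * SE2 Rj ![xj, yj])⁻¹) - 6 ∧
    σ / (2 * ((xi - xj) ^ 2 + (yi - yj) ^ 2 - 4)) =
      σ / (2 * (normSq ((SE2 Ri ![xi, yi])⁻¹ * SE2 Rj ![xj, yj] * e1 *
        ((SE2 Ri ![xi, yi])⁻¹ * SE2 Rj ![xj, yj])⁻¹) - 6)) ∧
    x ^ 2 + y ^ 2 - 4 =
      normSq ((SE2 R ![x, y])⁻¹ * e1 * SE2 R ![x, y]) - 6 ∧
    σ / (2 * (x ^ 2 + y ^ 2 - 4)) =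
      σ / (2 * (normSq ((SE2 R ![x, y])⁻¹ * e1 * SE2 R ![x, y]) - 6)) :=
  potentials_via_adjoint_general Ri Rj R xi yi xj yj x y hRi hRj hR σ
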